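/- Let c be a closure operator on the subsets of E with c(∅) = ∅, let L ⊆ E, let F₁ ⊇ F₂ ⊇ ⋯ ⊇ Fₙ be an n-approximation of L by closed sets, and for 1 ≤ k ≤ n let S_k = F₁ − F₂ + ⋯ ± F_k. Then for every 1 ≤ k ≤ n: if k is odd then f(S_k) = f(F_k), and if k is even then g(E ∖ S_k) = g(F_k), where f(X) = c(X ∖ L) and g(X) = c(X ∩ L). -/
import Mathlib


/-- The partial alternating combination `S_j = F₁ − F₂ + ⋯ ± F_j`, evaluated
from left to right (the chain `F` is indexed from `0`, so `F i` is `F_{i+1}`). -/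
def partialAlt {E : Type*} (F : ℕ → Set E) : ℕ → Set E
  | 0 => ∅
  | j + 1 => if Even j then partialAlt F j ∪ F j else partialAlt F j \ F j

/-- `F₁ ⊇ ⋯ ⊇ Fₙ` is an `n`-approximation of `L` by `c`-closed sets:
the `F_i` are closed, decreasing, and `S_{2k} ⊆ L` whenever `2k ≤ n` while
`L ⊆ S_{2k+1}` whenever `2k+1 ≤ n`. -/
def IsNApprox {E : Type*} (c : Set E → Set E) (L : Set E) (F : ℕ → Set E) (n : ℕ) : Prop :=
  (∀ i, i < n → c (F i) = F i) ∧ (∀ i j, i ≤ j → j < n → F j ⊆ F i) ∧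
  (∀ k, 2 * k ≤ n → partialAlt F (2 * k) ⊆ L) ∧
  (∀ k, 2 * k + 1 ≤ n → L ⊆ partialAlt F (2 * k + 1))

/-- For an `n`-approximation `F₁ ⊇ ⋯ ⊇ Fₙ` of `L` with partial alternating sums
`S_k`, one has `f(S_k) = f(F_k)` for odd `k` and `g(E ∖ S_k) = g(F_k)` for even
`k`, where `f(X) = c(X ∖ L)` and `g(X) = c(X ∩ L)`. (Indices here are shifted:
the 1-indexed `k` of the chain corresponds to `k + 1` with `k` 0-indexed, so
odd 1-indexed positions correspond to even `k` below.) -/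
theorem partialAlt_fg {E : Type*} (c : Set E → Set E)
    (hext : ∀ X, X ⊆ c X) (hidem : ∀ X, c (c X) = c X)
    (hiso : ∀ X Y, X ⊆ Y → c X ⊆ c Y) (hbot : c ∅ = ∅)
    (L : Set E) (n : ℕ) (F : ℕ → Set E) (happrox : IsNApprox c L F n)
    (f g : Set E → Set E) (hf : ∀ X, f X = c (X \ L)) (hg : ∀ X, g X = c (X ∩ L)) :
    ∀ k, k < n →
      (Even k → f (partialAlt F (k + 1)) = f (F k)) ∧
      (Odd k → g ((partialAlt F (k + 1))ᶜ) = g (F k)) := by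
  obtain ⟨hcl, hdec, hSL, hLS⟩ := happrox
  intro k hk
  constructor
  · rintro ⟨m, rfl⟩
    have hsub : partialAlt F (m + m) ⊆ L := by
      simpa [two_mul] using hSL m (by omega)
    rw [hf, hf]
    have heq : partialAlt F (m + m + 1) \ L = F (m + m) \ L := by
      rw [partialAlt, if_pos ⟨m, rfl⟩]
      ext x
      simp only [Set.mem_diff, Set.mem_union]
      constructor
      · rintro ⟨hx | hx, hxL⟩
        · exact absurd (hsub hx) hxL
        · exact ⟨hx, hxL⟩
      · rintro ⟨hx, hxL⟩; exact ⟨Or.inr hx, hxL⟩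
    rw [heq]
  · rintro ⟨m, rfl⟩
    have hsub : L ⊆ partialAlt F (2 * m + 1) := hLS m (by omega)
    rw [hg, hg]
    have heq : (partialAlt F (2 * m + 1 + 1))ᶜ ∩ L = F (2 * m + 1) ∩ L := by
      rw [partialAlt, if_neg (by simp [Nat.even_add_one, parity_simps])]
      ext x
      simp only [Set.mem_compl_iff, Set.mem_diff, Set.mem_inter_iff, not_and, not_not]
      constructor
      · rintro ⟨h, hxL⟩
        exact ⟨h (hsub hxL), hxL⟩
      · rintro ⟨hx, hxL⟩
        exact ⟨fun _ => hx, hxL⟩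
    rw [heq]
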